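/- arXiv:1806.06119 — 3 statements merged into one kernel-verified Lean document; each statement's English description precedes it below -/
import Mathlib

section
/- Let (X, Σ, c, c_f) be a generalized control system satisfying (C1) and (C2), and let (γ, σ) be a generalized admissible trajectory starting from x defined on a totally ordered set I with minimum a and maximum b (i.e., γ(a) = x, c(x, γ(t), σ(t)) < +∞ for all t ∈ I, and for all t₁ ≤ t₂ in I there exists σ_{t₁→t₂} ∈ Σ with c(x, γ(t₂), σ(t₂)) ≥ c(x, γ(t₁), σ(t₁)) + c(γ(t₁), γ(t₂), σ_{t₁→t₂})). Then the map h : I → [0,+∞] defined by h(t) := c(x, γ(t), σ(t)) + V(γ(t)) is monotone increasing. -/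
open ENNReal

/-!
Concatenating controls (C1) gives the dynamic programming inequality
`V y ≤ c y z s + V z`; adding it to the admissibility inequality between `t₁ ≤ t₂`
gives `h t₁ ≤ h t₂`.
-/

noncomputable def valueFunction {X S : Type*} (c : X → X → S → ℝ≥0∞) (cf : X → ℝ≥0∞)
    (x : X) : ℝ≥0∞ :=
  ⨅ (y : X) (σ : S), c x y σ + cf y

theorem valueFunction_le_add {X S : Type*} {c : X → X → S → ℝ≥0∞} (cf : X → ℝ≥0∞)
    (C1 : ∀ x y z : X, ∀ σ₁ σ₂ : S, ∃ σ' : S, c x z σ' ≤ c x y σ₁ + c y z σ₂)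
    (y z : X) (s : S) :
    valueFunction c cf y ≤ c y z s + valueFunction c cf z := by
  simp only [valueFunction, ENNReal.add_iInf]
  refine le_iInf₂ fun w σ => ?_
  obtain ⟨σ', hσ'⟩ := C1 y z w s σ
  calc valueFunction c cf y ≤ c y w σ' + cf w :=
      iInf₂_le (f := fun w σ => c y w σ + cf w) w σ'
    _ ≤ c y z s + c z w σ + cf w := by gcongr
    _ = c y z s + (c z w σ + cf w) := add_assoc _ _ _

theorem h_monotone_general {X S : Type*}
    {I : Type*} [LinearOrder I]
    (c : X → X → S → ℝ≥0∞) (cf : X → ℝ≥0∞)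
    (C1 : ∀ x y z : X, ∀ σ₁ σ₂ : S, ∃ σ' : S, c x z σ' ≤ c x y σ₁ + c y z σ₂)
    (V : X → ℝ≥0∞)
    (hV : ∀ x, V x = ⨅ (y : X) (σ : S), c x y σ + cf y)
    (x : X) (γ : I → X) (σ : I → S)
    (hadm : ∀ t₁ t₂ : I, t₁ ≤ t₂ → ∃ s : S,
      c x (γ t₁) (σ t₁) + c (γ t₁) (γ t₂) s ≤ c x (γ t₂) (σ t₂)) :
    Monotone (fun t : I => c x (γ t) (σ t) + V (γ t)) := by
  obtain rfl : V = valueFunction c cf := funext hV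
  intro t₁ t₂ hle
  obtain ⟨s, hs⟩ := hadm t₁ t₂ hle
  calc c x (γ t₁) (σ t₁) + valueFunction c cf (γ t₁)
      ≤ c x (γ t₁) (σ t₁) + (c (γ t₁) (γ t₂) s + valueFunction c cf (γ t₂)) := by
        gcongr; exact valueFunction_le_add cf C1 _ _ _
    _ = c x (γ t₁) (σ t₁) + c (γ t₁) (γ t₂) s + valueFunction c cf (γ t₂) :=
        (add_assoc _ _ _).symm
    _ ≤ c x (γ t₂) (σ t₂) + valueFunction c cf (γ t₂) := by gcongr

/-- Along a generalized admissible trajectory, `t ↦ c(x,γ(t),σ(t)) + V(γ(t))` is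
monotone increasing. -/
theorem h_monotone {X S : Type*} [Nonempty X] [Nonempty S]
    {I : Type*} [LinearOrder I]
    (c : X → X → S → ℝ≥0∞) (cf : X → ℝ≥0∞)
    (C1 : ∀ x y z : X, ∀ σ₁ σ₂ : S, ∃ σ' : S, c x z σ' ≤ c x y σ₁ + c y z σ₂)
    (C2 : ∀ x z : X, ∀ σ : S, ∃ (y' : X) (σ₁' σ₂' : S),
      c x y' σ₁' + c y' z σ₂' ≤ c x z σ)
    (V : X → ℝ≥0∞)
    (hV : ∀ x, V x = ⨅ (y : X) (σ : S), c x y σ + cf y)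
    (a b : I) (ha : ∀ t, a ≤ t) (hb : ∀ t, t ≤ b)
    (x : X) (γ : I → X) (σ : I → S)
    (hstart : γ a = x)
    (hfin : ∀ t, c x (γ t) (σ t) ≠ ⊤)
    (hadm : ∀ t₁ t₂ : I, t₁ ≤ t₂ → ∃ s : S,
      c x (γ t₁) (σ t₁) + c (γ t₁) (γ t₂) s ≤ c x (γ t₂) (σ t₂)) :
    Monotone (fun t : I => c x (γ t) (σ t) + V (γ t)) :=
  h_monotone_general c cf C1 V hV x γ σ hadm
end

section
/- Let (X, Σ, c, c_f) be a generalized control system satisfying (C1) and (C2), and let (γ, σ) be an optimal generalized admissible trajectory on I = [a,b] starting from x (i.e., V(γ(a)) = c(γ(a), γ(t), σ(t)) + V(γ(t)) for all t ∈ I). Then for all t ≤ s in I, any σ_{t→s} ∈ Σ satisfying the admissibility inequality c(x, γ(s), σ(s)) ≥ c(x, γ(t), σ(t)) + c(γ(t), γ(s), σ_{t→s}) is an optimal transition from γ(t) to γ(s), i.e., V(γ(t)) = c(γ(t), γ(s), σ_{t→s}) + V(γ(s)). -/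
open ENNReal

/-! Subtracting the optimality relation at `t` from the one at `s` shows that, after the
finite cost `c x (γ t) (σ t)` is cancelled, every admissible transition `γ t → γ s` already
attains `V (γ t)`; the reverse inequality is the dynamic programming principle, which is the
concatenation property (C1). -/

theorem value_le_cost_add_value {X S : Type*} (c : X → X → S → ℝ≥0∞) (cf : X → ℝ≥0∞)
    (C1 : ∀ x y z : X, ∀ σ₁ σ₂ : S, ∃ σ' : S, c x z σ' ≤ c x y σ₁ + c y z σ₂)
    (V : X → ℝ≥0∞) (hV : ∀ x, V x = ⨅ (y : X) (σ : S), c x y σ + cf y)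
    (p q : X) (σ₀ : S) : V p ≤ c p q σ₀ + V q := by
  simp only [hV, ENNReal.add_iInf]
  refine le_iInf₂ fun z σ₂ => ?_
  obtain ⟨σ', hσ'⟩ := C1 p q z σ₀ σ₂
  calc ⨅ (y : X) (τ : S), c p y τ + cf y ≤ c p z σ' + cf z := (iInf_le _ z).trans (iInf_le _ σ')
    _ ≤ c p q σ₀ + c q z σ₂ + cf z := by gcongr
    _ = c p q σ₀ + (c q z σ₂ + cf z) := add_assoc _ _ _

theorem optimal_transitions_general {X S : Type*}
    {I : Type*} [LinearOrder I]
    (c : X → X → S → ℝ≥0∞) (cf : X → ℝ≥0∞)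
    (C1 : ∀ x y z : X, ∀ σ₁ σ₂ : S, ∃ σ' : S, c x z σ' ≤ c x y σ₁ + c y z σ₂)
    (V : X → ℝ≥0∞)
    (hV : ∀ x, V x = ⨅ (y : X) (σ : S), c x y σ + cf y)
    (a : I)
    (x : X) (γ : I → X) (σ : I → S)
    (hstart : γ a = x)
    (hfin : ∀ t, c x (γ t) (σ t) ≠ ⊤)
    (hopt : ∀ t : I, V (γ a) = c (γ a) (γ t) (σ t) + V (γ t)) :
    ∀ t s : I, t ≤ s → ∀ σts : S,
      c x (γ t) (σ t) + c (γ t) (γ s) σts ≤ c x (γ s) (σ s) →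
      V (γ t) = c (γ t) (γ s) σts + V (γ s) := by
  intro t s _ σts hσ
  have hvalue : c x (γ t) (σ t) + V (γ t) = c x (γ s) (σ s) + V (γ s) := by
    rw [← hstart]
    exact (hopt t).symm.trans (hopt s)
  refine le_antisymm (value_le_cost_add_value c cf C1 V hV _ _ _)
    ((ENNReal.add_le_add_iff_left (hfin t)).mp ?_)
  calc c x (γ t) (σ t) + (c (γ t) (γ s) σts + V (γ s))
      = c x (γ t) (σ t) + c (γ t) (γ s) σts + V (γ s) := (add_assoc _ _ _).symm
    _ ≤ c x (γ s) (σ s) + V (γ s) := by gcongr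
    _ = c x (γ t) (σ t) + V (γ t) := hvalue.symm

/-- Along an optimal trajectory, any admissible intermediate transition is itself
an optimal transition. -/
theorem optimal_transitions {X S : Type*} [Nonempty X] [Nonempty S]
    {I : Type*} [LinearOrder I]
    (c : X → X → S → ℝ≥0∞) (cf : X → ℝ≥0∞)
    (C1 : ∀ x y z : X, ∀ σ₁ σ₂ : S, ∃ σ' : S, c x z σ' ≤ c x y σ₁ + c y z σ₂)
    (C2 : ∀ x z : X, ∀ σ : S, ∃ (y' : X) (σ₁' σ₂' : S),
      c x y' σ₁' + c y' z σ₂' ≤ c x z σ)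
    (V : X → ℝ≥0∞)
    (hV : ∀ x, V x = ⨅ (y : X) (σ : S), c x y σ + cf y)
    (a b : I) (ha : ∀ t, a ≤ t) (hb : ∀ t, t ≤ b)
    (x : X) (γ : I → X) (σ : I → S)
    (hstart : γ a = x)
    (hfin : ∀ t, c x (γ t) (σ t) ≠ ⊤)
    (hadm : ∀ t₁ t₂ : I, t₁ ≤ t₂ → ∃ s : S,
      c x (γ t₁) (σ t₁) + c (γ t₁) (γ t₂) s ≤ c x (γ t₂) (σ t₂))
    (hopt : ∀ t : I, V (γ a) = c (γ a) (γ t) (σ t) + V (γ t)) :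
    ∀ t s : I, t ≤ s → ∀ σts : S,
      c x (γ t) (σ t) + c (γ t) (γ s) σts ≤ c x (γ s) (σ s) →
      V (γ t) = c (γ t) (γ s) σts + V (γ s) :=
  optimal_transitions_general c cf C1 V hV a x γ σ hstart hfin hopt
end

section
/- Let Ψ : ℝ^d × ℝ^d → [0,+∞] be lower semicontinuous with Ψ(x,v) = sup_h [a_h(x) + ⟨v, b_h(x)⟩] for countable families of continuous functions a_h : ℝ^d → ℝ, b_h : ℝ^d → ℝ^d. Suppose μ_k ⇀ μ narrowly in 𝒫(ℝ^d) and v_k ∈ L¹_{μ_k}(ℝ^d;ℝ^d) are such that the vector measures v_k μ_k ⇀ w μ weakly-* for some w ∈ L¹_μ. If a_h, b_h have compact support, then ∫ Ψ(x, w(x)) dμ(x) ≤ liminf_k ∫ Ψ(x, v_k(x)) dμ_k(x). -/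
open ENNReal MeasureTheory Filter

/-!
Each `Ψ x` is a supremum of the affine functions `u ↦ a h x + ⟪u, b h x⟫`, so for continuous
weights `χ h ≥ 0` with `∑ h < n, χ h ≤ 1` it dominates the affine function with coefficients
`φ = ∑ χ h * a h` and `ψ = ∑ χ h • b h`, which are continuous with compact support. Narrow and
weak-* convergence pass `∫ φ + ⟪v k, ψ⟫ dμ k` to the limit, so the liminf dominates
`∫ ∑ χ h * ℓ h dμ`, where `ℓ h = a h + ⟪w, b h⟫`. Conversely, `max (0, ℓ 0, …, ℓ (n - 1))` is
approximated in `L¹(μ)` by such combinations: when `ℓ n` is added, its weight `θ` approximates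
the indicator of the set where `ℓ n` exceeds the previous maximum (regularity of a finite measure
and Urysohn's lemma), and the old weights are multiplied by `1 - θ`. Monotone convergence in `n`
concludes.
-/

open scoped RealInnerProductSpace Topology

theorem HasCompactSupport.finsetSum {ι X M : Type*} [TopologicalSpace X] [AddCommMonoid M]
    {s : Finset ι} {f : ι → X → M} (hf : ∀ i ∈ s, HasCompactSupport (f i)) :
    HasCompactSupport (fun x => ∑ i ∈ s, f i x) := by
  simpa only [← Finset.sum_apply] using
    Finset.sum_induction f HasCompactSupport (fun _ _ => HasCompactSupport.add) .zero hf

theorem ofReal_integral_le_lintegral_ofReal {α : Type*} [MeasurableSpace α] {μ : Measure α}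
    {f : α → ℝ} (hf : Integrable f μ) :
    ENNReal.ofReal (∫ x, f x ∂μ) ≤ ∫⁻ x, ENNReal.ofReal (f x) ∂μ :=
  ENNReal.ofReal_le_of_le_toReal <|
    (integral_eq_lintegral_pos_part_sub_lintegral_neg_part hf).le.trans
      (sub_le_self _ ENNReal.toReal_nonneg)

theorem ofReal_le_liminf_lintegral {α : Type*} [MeasurableSpace α] {μ : ℕ → Measure α}
    {f : ℕ → α → ℝ} {G : ℕ → α → ℝ≥0∞} {L : ℝ} (hf : ∀ k, Integrable (f k) (μ k))
    (hfG : ∀ k x, ENNReal.ofReal (f k x) ≤ G k x)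
    (hL : Tendsto (fun k => ∫ x, f k x ∂μ k) atTop (𝓝 L)) :
    ENNReal.ofReal L ≤ liminf (fun k => ∫⁻ x, G k x ∂μ k) atTop := by
  rw [← ((ENNReal.continuous_ofReal.tendsto L).comp hL).liminf_eq]
  exact liminf_le_liminf <| Eventually.of_forall fun k =>
    (ofReal_integral_le_lintegral_ofReal (hf k)).trans (lintegral_mono (hfG k))

theorem ofReal_sum_mul_le_iSup_ofReal {ι : Type*} (s : Finset ι) {c : ι → ℝ} (g : ι → ℝ)
    (hc0 : ∀ i ∈ s, 0 ≤ c i) (hc1 : ∑ i ∈ s, c i ≤ 1) :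
    ENNReal.ofReal (∑ i ∈ s, c i * g i) ≤ ⨆ i, ENNReal.ofReal (g i) := calc
  _ ≤ ∑ i ∈ s, ENNReal.ofReal (c i * g i) :=
      Finset.le_sum_of_subadditive _ ENNReal.ofReal_zero.le (fun _ _ => ENNReal.ofReal_add_le) s _
  _ = ∑ i ∈ s, ENNReal.ofReal (c i) * ENNReal.ofReal (g i) :=
      Finset.sum_congr rfl fun i hi => ENNReal.ofReal_mul (hc0 i hi)
  _ ≤ ∑ i ∈ s, ENNReal.ofReal (c i) * ⨆ i, ENNReal.ofReal (g i) := by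
      gcongr with i; exact le_iSup (fun i => ENNReal.ofReal (g i)) i
  _ = ENNReal.ofReal (∑ i ∈ s, c i) * ⨆ i, ENNReal.ofReal (g i) := by
      rw [← Finset.sum_mul, ENNReal.ofReal_sum_of_nonneg hc0]
  _ ≤ ⨆ i, ENNReal.ofReal (g i) := by
      grw [hc1, ENNReal.ofReal_one, one_mul]

theorem sum_mul_add_inner_eq {E ι : Type*} [NormedAddCommGroup E] [InnerProductSpace ℝ E]
    (s : Finset ι) (c α : ι → ℝ) (β : ι → E) (u : E) :
    ∑ i ∈ s, c i * (α i + ⟪u, β i⟫) = ∑ i ∈ s, c i * α i + ⟪u, ∑ i ∈ s, c i • β i⟫ := by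
  simp only [inner_sum, inner_smul_right, mul_add, Finset.sum_add_distrib]

theorem edist_max_le_of_mem_Icc {g ℓ T θ : ℝ} (hθ : θ ∈ Set.Icc 0 1) :
    edist (max g ℓ) ((1 - θ) * T + θ * ℓ)
      ≤ edist g T + edist θ (if g < ℓ then 1 else 0) * edist ℓ g := by
  set e : ℝ := if g < ℓ then 1 else 0
  have hmax : max g ℓ = g + e * (ℓ - g) := by
    by_cases h : g < ℓ
    · simp [e, h, max_eq_right h.le]
    · simp [e, h, max_eq_left (not_lt.mp h)]
  simp only [edist_dist]
  rw [← ENNReal.ofReal_mul dist_nonneg,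
    ← ENNReal.ofReal_add dist_nonneg (mul_nonneg dist_nonneg dist_nonneg)]
  refine ENNReal.ofReal_le_ofReal ?_
  simp only [Real.dist_eq]
  calc |max g ℓ - ((1 - θ) * T + θ * ℓ)| = |(1 - θ) * (g - T) + (e - θ) * (ℓ - g)| := by
        rw [hmax]; ring_nf
    _ ≤ |(1 - θ) * (g - T)| + |(e - θ) * (ℓ - g)| := abs_add_le _ _
    _ ≤ |g - T| + |θ - e| * |ℓ - g| := by
        rw [abs_mul, abs_mul, abs_sub_comm e, abs_of_nonneg (sub_nonneg.mpr hθ.2)]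
        gcongr
        exact mul_le_of_le_one_left (abs_nonneg _) (by linarith [hθ.1])

section TestPair

variable {X E : Type*} [TopologicalSpace X] [MeasurableSpace X] [OpensMeasurableSpace X]
  [NormedAddCommGroup E] [InnerProductSpace ℝ E] [SecondCountableTopology E]

theorem MeasureTheory.Integrable.inner_of_hasCompactSupport {μ : Measure X} {ψ u : X → E}
    (hu : Integrable u μ) (hψ : Continuous ψ) (hψs : HasCompactSupport ψ) :
    Integrable (fun x => ⟪u x, ψ x⟫) μ := by
  obtain ⟨C, hC⟩ := hψ.bounded_above_of_compact_support hψs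
  refine (hu.norm.mul_const C).mono' (hu.1.inner hψ.aestronglyMeasurable)
    (ae_of_all _ fun x => ?_)
  exact (norm_inner_le_norm _ _).trans (mul_le_mul_of_nonneg_left (hC x) (norm_nonneg _))

theorem ofReal_integral_add_inner_le_liminf {Ψ : X → E → ℝ≥0∞} {μ : ℕ → Measure X}
    {μlim : Measure X} [∀ k, IsFiniteMeasure (μ k)] [IsFiniteMeasure μlim] {v : ℕ → X → E}
    {w : X → E} (hv : ∀ k, Integrable (v k) (μ k)) (hw : Integrable w μlim)
    (hnarrow : ∀ φ : X → ℝ, Continuous φ → (∃ M : ℝ, ∀ x, |φ x| ≤ M) →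
      Tendsto (fun k => ∫ x, φ x ∂(μ k)) atTop (𝓝 (∫ x, φ x ∂μlim)))
    (hweak : ∀ φ : X → E, Continuous φ → HasCompactSupport φ →
      Tendsto (fun k => ∫ x, ⟪φ x, v k x⟫ ∂(μ k)) atTop (𝓝 (∫ x, ⟪φ x, w x⟫ ∂μlim)))
    {φ : X → ℝ} {ψ : X → E} (hφ : Continuous φ) (hφs : HasCompactSupport φ)
    (hψ : Continuous ψ) (hψs : HasCompactSupport ψ)
    (hΨ : ∀ x u, ENNReal.ofReal (φ x + ⟪u, ψ x⟫) ≤ Ψ x u) :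
    ENNReal.ofReal (∫ x, φ x + ⟪w x, ψ x⟫ ∂μlim) ≤
      liminf (fun k => ∫⁻ x, Ψ x (v k x) ∂(μ k)) atTop := by
  have hint {ν : Measure X} [IsFiniteMeasure ν] {u : X → E} (hu : Integrable u ν) :
      ∫ x, φ x + ⟪u x, ψ x⟫ ∂ν = ∫ x, φ x ∂ν + ∫ x, ⟪ψ x, u x⟫ ∂ν := by
    rw [integral_add (hφ.integrable_of_hasCompactSupport hφs)
      (hu.inner_of_hasCompactSupport hψ hψs)]
    simp_rw [real_inner_comm (u _)]
  obtain ⟨C, hC⟩ := hφ.bounded_above_of_compact_support hφs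
  refine ofReal_le_liminf_lintegral (f := fun k x => φ x + ⟪v k x, ψ x⟫)
    (fun k => (hφ.integrable_of_hasCompactSupport hφs).add
      ((hv k).inner_of_hasCompactSupport hψ hψs)) (fun k x => hΨ x (v k x)) ?_
  simp only [hint (hv _), hint hw]
  exact (hnarrow φ hφ ⟨C, hC⟩).add (hweak ψ hψ hψs)

end TestPair

def runningMax {X : Type*} (ℓ : ℕ → X → ℝ) : ℕ → X → ℝ
  | 0 => 0
  | n + 1 => fun x => max (runningMax ℓ n x) (ℓ n x)

section RunningMax

variable {X : Type*} (ℓ : ℕ → X → ℝ)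

theorem runningMax_nonneg (n : ℕ) (x : X) : 0 ≤ runningMax ℓ n x := by
  induction n with
  | zero => exact le_rfl
  | succ n ih => exact ih.trans (le_max_left _ _)

theorem monotone_runningMax (x : X) : Monotone fun n => runningMax ℓ n x :=
  monotone_nat_of_le_succ fun _ => le_max_left _ _

theorem iSup_ofReal_runningMax (x : X) :
    ⨆ n, ENNReal.ofReal (runningMax ℓ n x) = ⨆ h, ENNReal.ofReal (ℓ h x) := by
  refine le_antisymm (iSup_le fun n => ?_)
    (iSup_le fun h => le_iSup_of_le (h + 1) (ENNReal.ofReal_le_ofReal (le_max_right _ _)))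
  induction n with
  | zero => simp [runningMax]
  | succ n ih =>
    simp only [runningMax, ENNReal.ofReal_max]
    exact max_le ih (le_iSup (fun h => ENNReal.ofReal (ℓ h x)) n)

variable [MeasurableSpace X] {μ : Measure X} {ℓ}

theorem integrable_runningMax (hℓ : ∀ h, Integrable (ℓ h) μ) (n : ℕ) :
    Integrable (runningMax ℓ n) μ := by
  induction n with
  | zero => exact integrable_zero _ _ _
  | succ n ih => exact ih.sup (hℓ n)

end RunningMax

def extendWeights {X : Type*} (n : ℕ) (χ : ℕ → X → ℝ) (θ : X → ℝ) : ℕ → X → ℝ :=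
  fun h x => if h < n then (1 - θ x) * χ h x else θ x

theorem sum_extendWeights_mul {X : Type*} {n : ℕ} {χ : ℕ → X → ℝ} {θ : X → ℝ}
    (c : ℕ → X → ℝ) (x : X) :
    ∑ h ∈ Finset.range (n + 1), extendWeights n χ θ h x * c h x
      = (1 - θ x) * ∑ h ∈ Finset.range n, χ h x * c h x + θ x * c n x := by
  rw [Finset.sum_range_succ, Finset.mul_sum]
  simp only [extendWeights, lt_irrefl, if_false]
  congr 1
  refine Finset.sum_congr rfl fun h hh => ?_
  rw [if_pos (Finset.mem_range.1 hh), mul_assoc]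

section Approximation

variable {X : Type*} [TopologicalSpace X] [TopologicalSpace.PseudoMetrizableSpace X]
  [MeasurableSpace X] [BorelSpace X] {μ : Measure X}

theorem exists_continuous_lintegral_edist_indicator_mul_le {s : Set X}
    (hs : NullMeasurableSet s μ) {f : X → ℝ} (hf : Integrable f μ) {ε : ℝ≥0∞} (hε : ε ≠ 0) :
    ∃ θ : X → ℝ, Continuous θ ∧ (∀ x, θ x ∈ Set.Icc 0 1) ∧
      ∫⁻ x, edist (θ x) (s.indicator 1 x) * ‖f x‖ₑ ∂μ ≤ ε := by
  obtain ⟨t, -, ht, hts⟩ := hs.exists_measurable_subset_ae_eq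
  set ν := μ.withDensity fun x => ‖f x‖ₑ
  have : IsFiniteMeasure ν := isFiniteMeasure_withDensity hf.2.ne
  have hε2 : ε / 2 ≠ 0 := (ENNReal.half_pos hε).ne'
  obtain ⟨F, hFt, hF, hνF⟩ := ht.exists_isClosed_sdiff_lt (measure_ne_top ν t) hε2
  obtain ⟨U, htU, hU, -, hνU⟩ := ht.exists_isOpen_sdiff_lt (measure_ne_top ν t) hε2
  obtain ⟨θ, hθU, hθF, hθ01⟩ := exists_continuous_zero_one_of_isClosed hU.isClosed_compl hF
    (Set.disjoint_compl_left_iff_subset.mpr (hFt.trans htU))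
  refine ⟨θ, θ.continuous, hθ01, ?_⟩
  have hpt : ∀ x, edist (θ x) (t.indicator 1 x) * ‖f x‖ₑ ≤ (U \ F).indicator (‖f ·‖ₑ) x := by
    intro x
    by_cases hxF : x ∈ F
    · simp [hθF hxF, hFt hxF]
    by_cases hxU : x ∈ U
    · rw [Set.indicator_of_mem (Set.mem_sdiff_of_mem hxU hxF)]
      refine mul_le_of_le_one_left zero_le ?_
      have he : t.indicator 1 x ∈ Set.Icc (0 : ℝ) 1 := by by_cases hxt : x ∈ t <;> simp [hxt]
      rw [edist_dist]
      exact ENNReal.ofReal_le_one.mpr (Real.dist_le_of_mem_Icc_01 (hθ01 x) he)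
    · have hxt : x ∉ t := fun h => hxU (htU h)
      simp [hθU hxU, hxt]
  calc ∫⁻ x, edist (θ x) (s.indicator 1 x) * ‖f x‖ₑ ∂μ
      = ∫⁻ x, edist (θ x) (t.indicator 1 x) * ‖f x‖ₑ ∂μ := by
        refine lintegral_congr_ae ?_
        filter_upwards [indicator_ae_eq_of_ae_eq_set (f := (1 : X → ℝ)) hts] with x hx
        rw [hx]
    _ ≤ ∫⁻ x, (U \ F).indicator (‖f ·‖ₑ) x ∂μ := lintegral_mono hpt
    _ = ν (U \ F) := by
        rw [lintegral_indicator (hU.measurableSet.diff hF.measurableSet),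
          withDensity_apply _ (hU.measurableSet.diff hF.measurableSet)]
    _ ≤ ν (U \ t) + ν (t \ F) := by
        rw [← Set.sdiff_union_sdiff_cancel htU hFt]; exact measure_union_le _ _
    _ ≤ ε / 2 + ε / 2 := add_le_add hνU.le hνF.le
    _ = ε := ENNReal.add_halves ε

theorem exists_continuous_weights_lintegral_edist_runningMax_le {ℓ : ℕ → X → ℝ}
    (hℓ : ∀ h, Integrable (ℓ h) μ) (n : ℕ) {ε : ℝ≥0∞} (hε : ε ≠ 0) :
    ∃ χ : ℕ → X → ℝ, (∀ h, Continuous (χ h)) ∧ (∀ h x, 0 ≤ χ h x) ∧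
      (∀ x, ∑ h ∈ Finset.range n, χ h x ≤ 1) ∧
      ∫⁻ x, edist (runningMax ℓ n x) (∑ h ∈ Finset.range n, χ h x * ℓ h x) ∂μ ≤ ε := by
  induction n generalizing ε with
  | zero => exact ⟨0, fun _ => continuous_const, fun _ _ => le_rfl, by simp, by simp [runningMax]⟩
  | succ n ih =>
    have hε2 : ε / 2 ≠ 0 := (ENNReal.half_pos hε).ne'
    obtain ⟨χ, hχc, hχ0, hχ1, hχε⟩ := ih hε2
    set g := runningMax ℓ n
    set T := fun x => ∑ h ∈ Finset.range n, χ h x * ℓ h x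
    set B := {x | g x < ℓ n x}
    have hg : Integrable g μ := integrable_runningMax hℓ n
    obtain ⟨θ, hθc, hθ01, hθε⟩ := exists_continuous_lintegral_edist_indicator_mul_le (s := B)
      (nullMeasurableSet_lt hg.aemeasurable (hℓ n).aemeasurable) ((hℓ n).sub hg) hε2
    refine ⟨extendWeights n χ θ, fun h => continuous_if_const _
      (fun _ => (continuous_const.sub hθc).mul (hχc h)) (fun _ => hθc), fun h x => ?_,
      fun x => ?_, ?_⟩
    · unfold extendWeights
      split_ifs
      exacts [mul_nonneg (sub_nonneg.2 (hθ01 x).2) (hχ0 h x), (hθ01 x).1]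
    · have hsum := sum_extendWeights_mul (n := n) (χ := χ) (θ := θ) (fun _ _ => 1) x
      simp only [mul_one] at hsum
      rw [hsum]
      nlinarith [mul_nonneg (sub_nonneg.2 (hθ01 x).2) (sub_nonneg.2 (hχ1 x))]
    · have hT : AEMeasurable T μ := Finset.aemeasurable_fun_sum _ fun h _ =>
        (hχc h).measurable.aemeasurable.mul (hℓ h).aemeasurable
      calc ∫⁻ x, edist (runningMax ℓ (n + 1) x)
            (∑ h ∈ Finset.range (n + 1), extendWeights n χ θ h x * ℓ h x) ∂μ
          ≤ ∫⁻ x, edist (g x) (T x) + edist (θ x) (B.indicator 1 x) * ‖ℓ n x - g x‖ₑ ∂μ := by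
            refine lintegral_mono fun x => ?_
            rw [sum_extendWeights_mul, ← edist_eq_enorm_sub]
            simp only [B, Set.indicator_apply, Set.mem_ofPred_eq, Pi.one_apply]
            exact edist_max_le_of_mem_Icc (hθ01 x)
        _ = ∫⁻ x, edist (g x) (T x) ∂μ +
              ∫⁻ x, edist (θ x) (B.indicator 1 x) * ‖ℓ n x - g x‖ₑ ∂μ :=
            lintegral_add_left' (hg.aemeasurable.edist hT) _
        _ ≤ ε / 2 + ε / 2 := add_le_add hχε hθε
        _ = ε := ENNReal.add_halves ε

theorem lintegral_iSup_ofReal_le_of_forall_continuous_weights {ℓ : ℕ → X → ℝ}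
    (hℓ : ∀ h, Integrable (ℓ h) μ) {L : ℝ≥0∞}
    (hL : ∀ (n : ℕ) (χ : ℕ → X → ℝ), (∀ h, Continuous (χ h)) → (∀ h x, 0 ≤ χ h x) →
      (∀ x, ∑ h ∈ Finset.range n, χ h x ≤ 1) →
      ENNReal.ofReal (∫ x, ∑ h ∈ Finset.range n, χ h x * ℓ h x ∂μ) ≤ L) :
    ∫⁻ x, ⨆ h, ENNReal.ofReal (ℓ h x) ∂μ ≤ L := by
  have hg := integrable_runningMax hℓ
  rw [lintegral_congr fun x => (iSup_ofReal_runningMax ℓ x).symm]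
  rw [lintegral_iSup' (fun n => (hg n).aemeasurable.ennreal_ofReal)
    (ae_of_all _ fun x _ _ hmn => ENNReal.ofReal_le_ofReal (monotone_runningMax ℓ x hmn))]
  refine iSup_le fun n => ?_
  rw [← ofReal_integral_eq_lintegral_ofReal (hg n) (ae_of_all _ (runningMax_nonneg ℓ n))]
  refine ENNReal.le_of_forall_pos_le_add fun ε hε _ => ?_
  obtain ⟨χ, hχc, hχ0, hχ1, hχε⟩ :=
    exists_continuous_weights_lintegral_edist_runningMax_le hℓ n (ENNReal.coe_ne_zero.2 hε.ne')
  have hT : Integrable (fun x => ∑ h ∈ Finset.range n, χ h x * ℓ h x) μ :=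
    integrable_finsetSum _ fun h hh => (hℓ h).bdd_mul (c := 1) (hχc h).aestronglyMeasurable
      (ae_of_all _ fun x => by
        rw [Real.norm_of_nonneg (hχ0 h x)]
        exact (Finset.single_le_sum (fun j _ => hχ0 j x) hh).trans (hχ1 x))
  have hclose : ∫ x, runningMax ℓ n x ∂μ ≤ ∫ x, ∑ h ∈ Finset.range n, χ h x * ℓ h x ∂μ + ε := by
    have := edist_le_coe.1 ((edist_integral_le_lintegral_edist (hg n) hT).trans hχε)
    rw [← NNReal.coe_le_coe, coe_nndist, Real.dist_eq, abs_sub_le_iff] at this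
    linarith [this.1]
  calc ENNReal.ofReal (∫ x, runningMax ℓ n x ∂μ)
      ≤ ENNReal.ofReal (∫ x, ∑ h ∈ Finset.range n, χ h x * ℓ h x ∂μ) + ENNReal.ofReal ε :=
        (ENNReal.ofReal_le_ofReal hclose).trans ENNReal.ofReal_add_le
    _ ≤ L + ε := by
        rw [ENNReal.ofReal_coe_nnreal]
        gcongr
        exact hL n χ hχc hχ0 hχ1

end Approximation

theorem effort_functional_lsc_general {d : ℕ}
    (Ψ : EuclideanSpace ℝ (Fin d) → EuclideanSpace ℝ (Fin d) → ℝ≥0∞)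
    (a : ℕ → EuclideanSpace ℝ (Fin d) → ℝ)
    (b : ℕ → EuclideanSpace ℝ (Fin d) → EuclideanSpace ℝ (Fin d))
    (hacont : ∀ h, Continuous (a h)) (hbcont : ∀ h, Continuous (b h))
    (hasupp : ∀ h, HasCompactSupport (a h)) (hbsupp : ∀ h, HasCompactSupport (b h))
    (hΨ : ∀ x v, Ψ x v = ⨆ h : ℕ,
      ENNReal.ofReal (a h x + (inner ℝ (v) (b h x) : ℝ)))
    (μ : ℕ → Measure (EuclideanSpace ℝ (Fin d)))
    (μlim : Measure (EuclideanSpace ℝ (Fin d)))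
    (hprob : ∀ k, IsProbabilityMeasure (μ k)) (hproblim : IsProbabilityMeasure μlim)
    (v : ℕ → EuclideanSpace ℝ (Fin d) → EuclideanSpace ℝ (Fin d))
    (w : EuclideanSpace ℝ (Fin d) → EuclideanSpace ℝ (Fin d))
    (hvInt : ∀ k, Integrable (v k) (μ k)) (hwInt : Integrable w μlim)
    (hnarrow : ∀ φ : EuclideanSpace ℝ (Fin d) → ℝ, Continuous φ →
      (∃ M : ℝ, ∀ x, |φ x| ≤ M) →
      Tendsto (fun k => ∫ x, φ x ∂(μ k)) atTop (nhds (∫ x, φ x ∂μlim)))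
    (hweak : ∀ φ : EuclideanSpace ℝ (Fin d) → EuclideanSpace ℝ (Fin d),
      Continuous φ → HasCompactSupport φ →
      Tendsto (fun k => ∫ x, (inner ℝ (φ x) (v k x) : ℝ) ∂(μ k)) atTop
        (nhds (∫ x, (inner ℝ (φ x) (w x) : ℝ) ∂μlim))) :
    ∫⁻ x, Ψ x (w x) ∂μlim ≤
      liminf (fun k => ∫⁻ x, Ψ x (v k x) ∂(μ k)) atTop := by
  have hℓ (h : ℕ) : Integrable (fun x => a h x + ⟪w x, b h x⟫) μlim :=
    ((hacont h).integrable_of_hasCompactSupport (hasupp h)).add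
      (hwInt.inner_of_hasCompactSupport (hbcont h) (hbsupp h))
  rw [lintegral_congr fun x => hΨ x (w x)]
  refine lintegral_iSup_ofReal_le_of_forall_continuous_weights hℓ fun n χ hχc hχ0 hχ1 => ?_
  simp_rw [sum_mul_add_inner_eq]
  refine ofReal_integral_add_inner_le_liminf hvInt hwInt hnarrow hweak
    (continuous_finsetSum _ fun h _ => (hχc h).mul (hacont h))
    (HasCompactSupport.finsetSum fun h _ => (hasupp h).mul_left)
    (continuous_finsetSum _ fun h _ => (hχc h).smul (hbcont h))
    (HasCompactSupport.finsetSum fun h _ => (hbsupp h).smul_left (f := χ h))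
    fun x u => ?_
  rw [hΨ, ← sum_mul_add_inner_eq _ (χ · x) (a · x) (b · x)]
  exact ofReal_sum_mul_le_iSup_ofReal _ _ (fun h _ => hχ0 h x) (hχ1 x)

/-- Lower semicontinuity of the effort functional along narrow convergence of
measures and weak-* convergence of the associated vector measures. -/
theorem effort_functional_lsc {d : ℕ}
    (Ψ : EuclideanSpace ℝ (Fin d) → EuclideanSpace ℝ (Fin d) → ℝ≥0∞)
    (hlsc : LowerSemicontinuous
      (fun q : EuclideanSpace ℝ (Fin d) × EuclideanSpace ℝ (Fin d) => Ψ q.1 q.2))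
    (a : ℕ → EuclideanSpace ℝ (Fin d) → ℝ)
    (b : ℕ → EuclideanSpace ℝ (Fin d) → EuclideanSpace ℝ (Fin d))
    (hacont : ∀ h, Continuous (a h)) (hbcont : ∀ h, Continuous (b h))
    (hasupp : ∀ h, HasCompactSupport (a h)) (hbsupp : ∀ h, HasCompactSupport (b h))
    (hΨ : ∀ x v, Ψ x v = ⨆ h : ℕ,
      ENNReal.ofReal (a h x + (inner ℝ (v) (b h x) : ℝ)))
    (μ : ℕ → Measure (EuclideanSpace ℝ (Fin d)))
    (μlim : Measure (EuclideanSpace ℝ (Fin d)))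
    (hprob : ∀ k, IsProbabilityMeasure (μ k)) (hproblim : IsProbabilityMeasure μlim)
    (v : ℕ → EuclideanSpace ℝ (Fin d) → EuclideanSpace ℝ (Fin d))
    (w : EuclideanSpace ℝ (Fin d) → EuclideanSpace ℝ (Fin d))
    (hvInt : ∀ k, Integrable (v k) (μ k)) (hwInt : Integrable w μlim)
    (hnarrow : ∀ φ : EuclideanSpace ℝ (Fin d) → ℝ, Continuous φ →
      (∃ M : ℝ, ∀ x, |φ x| ≤ M) →
      Tendsto (fun k => ∫ x, φ x ∂(μ k)) atTop (nhds (∫ x, φ x ∂μlim)))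
    (hweak : ∀ φ : EuclideanSpace ℝ (Fin d) → EuclideanSpace ℝ (Fin d),
      Continuous φ → HasCompactSupport φ →
      Tendsto (fun k => ∫ x, (inner ℝ (φ x) (v k x) : ℝ) ∂(μ k)) atTop
        (nhds (∫ x, (inner ℝ (φ x) (w x) : ℝ) ∂μlim))) :
    ∫⁻ x, Ψ x (w x) ∂μlim ≤
      liminf (fun k => ∫⁻ x, Ψ x (v k x) ∂(μ k)) atTop :=
  effort_functional_lsc_general Ψ a b hacont hbcont hasupp hbsupp hΨ μ μlim hprob hproblim v w hvInt
    hwInt hnarrow hweak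
end
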